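/- arXiv:1210.8371 — 3 statements merged into one kernel-verified Lean document; each statement's English description precedes it below -/
import Mathlib

section
/- Let V be a real vector space and let I, S : V → V be linear maps with I ∘ I = -id, S ∘ S = id, and I ∘ S = -S ∘ I, and set T := I ∘ S. Let ζ ∈ ℂ with |ζ| ≠ 1 and define I_ζ := (1 - |ζ|²)⁻¹ • ( (1 + |ζ|²)•I + (2 Re ζ)•S - (2 Im ζ)•T ). Then I_ζ ∘ I_ζ = -id, and I₀ = I. -/
/-!
`I`, `S`, `T = I S` pairwise anticommute with `I² = -1` and `S² = T² = 1`, so the cross terms of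
`(a I + b S + c T)²` cancel and it equals `(b² + c² - a²) id`. For `(a, b, c) = (1 + |ζ|², 2 Re ζ, -2 Im ζ)`
this scalar is `-(1 - |ζ|²)²`, which the prefactor `(1 - |ζ|²)⁻¹` normalises to `-1`.
-/

theorem mul_self_smul_add_smul_add_smul_mul_eq {R A : Type*} [CommRing R] [Ring A] [Algebra R A]
    {i s : A} (hi : i * i = -1) (hs : s * s = 1) (his : i * s = -(s * i)) (a b c : R) :
    (a • i + b • s + c • (i * s)) * (a • i + b • s + c • (i * s)) = (b ^ 2 + c ^ 2 - a ^ 2) • 1 := by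
  have hsi : s * i = -(i * s) := by rw [his, neg_neg]
  have h_i_is : i * (i * s) = -s := by rw [← mul_assoc, hi, neg_one_mul]
  have h_is_i : i * s * i = s := by rw [mul_assoc, hsi, mul_neg, ← mul_assoc, hi, neg_one_mul, neg_neg]
  have h_s_is : s * (i * s) = -i := by rw [← mul_assoc, hsi, neg_mul, mul_assoc, hs, mul_one]
  have h_is_s : i * s * s = i := by rw [mul_assoc, hs, mul_one]
  have h_is_is : i * s * (i * s) = 1 := by rw [mul_assoc, h_s_is, mul_neg, hi, neg_neg]
  simp only [add_mul, mul_add, smul_mul_assoc, mul_smul_comm, hi, hs, hsi,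
    h_i_is, h_is_i, h_s_is, h_is_s, h_is_is]
  module

theorem mul_self_inv_smul_eq_neg_one {K A : Type*} [Field K] [Ring A] [Algebra K A]
    {x : A} {u : K} (hu : u ≠ 0) (hx : x * x = -u ^ 2 • 1) :
    (u⁻¹ • x) * (u⁻¹ • x) = -1 := by
  rw [smul_mul_smul_comm, hx, smul_smul]
  field_simp
  simp

/-- With `I² = -id`, `S² = id`, `IS = -SI`, `T := IS`, and `ζ ∈ ℂ` with
`|ζ| ≠ 1`, the endomorphism
`I_ζ = (1 - |ζ|²)⁻¹ ((1 + |ζ|²) I + (2 Re ζ) S - (2 Im ζ) T)` satisfies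
`I_ζ² = -id`, and `I₀ = I`. -/
theorem stmt4 (V : Type*) [AddCommGroup V] [Module ℝ V]
    (I S : V →ₗ[ℝ] V)
    (hI : I ∘ₗ I = -LinearMap.id) (hS : S ∘ₗ S = LinearMap.id)
    (hIS : I ∘ₗ S = -(S ∘ₗ I)) (ζ : ℂ) (hζ : ‖ζ‖ ≠ 1) :
    let T : V →ₗ[ℝ] V := I ∘ₗ S
    let Iζ : ℂ → (V →ₗ[ℝ] V) := fun z =>
      (1 - ‖z‖ ^ 2)⁻¹ •
        ((1 + ‖z‖ ^ 2) • I + (2 * z.re) • S - (2 * z.im) • T)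
    Iζ ζ ∘ₗ Iζ ζ = -LinearMap.id ∧ Iζ 0 = I := by
  intro T Iζ
  refine ⟨?_, by simp [Iζ]⟩
  have hu : 1 - ‖ζ‖ ^ 2 ≠ 0 := by
    rwa [sub_ne_zero, ne_comm, Ne, pow_eq_one_iff_of_nonneg (norm_nonneg ζ) two_ne_zero]
  have hscalar : (2 * ζ.re) ^ 2 + (2 * ζ.im) ^ 2 - (1 + ‖ζ‖ ^ 2) ^ 2 = -(1 - ‖ζ‖ ^ 2) ^ 2 := by
    rw [Complex.sq_norm, Complex.normSq_apply]; ring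
  have hsq := mul_self_smul_add_smul_add_smul_mul_eq (R := ℝ) (A := Module.End ℝ V) hI hS hIS
    (1 + ‖ζ‖ ^ 2) (2 * ζ.re) (-(2 * ζ.im))
  rw [neg_sq, hscalar, neg_smul, ← sub_eq_add_neg] at hsq
  exact mul_self_inv_smul_eq_neg_one hu hsq
end

section
/- Let V be a real vector space, g : V × V → ℝ a symmetric nondegenerate bilinear form, and I, S : V → V linear maps with I ∘ I = -id, S ∘ S = id, I ∘ S = -S ∘ I, which are skew-adjoint with respect to g (g(Iv, w) = -g(v, Iw) and g(Sv, w) = -g(v, Sw) for all v, w). Set T := I ∘ S and define the complex-valued bilinear form ω(v, w) := g(Sv, w) + i·g(Tv, w). Then: (a) ω(Iv, w) = i·ω(v, w) and ω(v, Iw) = i·ω(v, w) for all v, w (ω has type (2,0) with respect to I); (b) ω(v, v) = 0 for all v (ω is alternating); (c) if ω(v, w) = 0 for all w ∈ V then v = 0 (ω is nondegenerate). -/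
/-!
Since `S I = -T` and `T I = S`, precomposing with `I` sends the
pair of real forms `(g(S·,·), g(T·,·))` to `(-g(T·,·), g(S·,·))`, which is multiplication by `i`;
skew-adjointness of `I` moves `I` to the other slot. The anticommuting skew maps `I` and `S` have a
skew product `T`, and a skew map `A` has `g(Av, v) = 0` for symmetric `g`, so `ω` is alternating.
Nondegeneracy is read off the real part: `g(Sv,·) = 0` forces `Sv = 0`, hence `v = S(Sv) = 0`.
-/

namespace LinearMap

variable {R V : Type*} [CommRing R] [AddCommGroup V] [Module R V]

theorem comp_comp_eq_of_anticomm {I S : V →ₗ[R] V} (hI : I ∘ₗ I = -id)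
    (hIS : I ∘ₗ S = -(S ∘ₗ I)) : (I ∘ₗ S) ∘ₗ I = S := by
  rw [hIS, neg_comp, comp_assoc, hI, comp_neg, comp_id, neg_neg]

namespace BilinForm

variable {g : LinearMap.BilinForm R V}

theorem apply_comp_apply_eq_neg_of_skew {A B : V →ₗ[R] V}
    (hA : ∀ v w, g (A v) w = -g v (A w)) (hB : ∀ v w, g (B v) w = -g v (B w))
    (hAB : A ∘ₗ B = -(B ∘ₗ A)) (v w : V) : g ((A ∘ₗ B) v) w = -g v ((A ∘ₗ B) w) := by
  have hBA : B (A w) = -A (B w) :=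
    neg_eq_iff_eq_neg.mp (by simpa using (LinearMap.congr_fun hAB w).symm)
  rw [LinearMap.comp_apply, hA, hB, hBA, map_neg, neg_neg, LinearMap.comp_apply]

theorem apply_self_eq_zero_of_skew [NoZeroDivisors R] [CharZero R] (hg : g.IsSymm)
    {A : V →ₗ[R] V} (hA : ∀ v w, g (A v) w = -g v (A w)) (v : V) : g (A v) v = 0 := by
  have h := hA v v
  rw [hg.eq v (A v)] at h
  exact self_eq_neg.mp h

end BilinForm

end LinearMap

theorem Complex.ofReal_add_I_mul_eq_I_mul {x' y' x y : ℝ} (hx : x' = -y) (hy : y' = x) :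
    (x' : ℂ) + I * y' = I * (x + I * y) := by
  subst hx hy
  push_cast
  linear_combination (-(y : ℂ)) * I_sq

/-- For a nondegenerate symmetric bilinear form `g` with `g`-skew-adjoint
`I, S` satisfying `I² = -id`, `S² = id`, `IS = -SI`, and `T := IS`, the complex bilinear
form `ω(v,w) = g(Sv,w) + i g(Tv,w)` has type (2,0) with respect to `I`, is alternating,
and is nondegenerate. -/
theorem stmt5 (V : Type*) [AddCommGroup V] [Module ℝ V]
    (g : LinearMap.BilinForm ℝ V) (hsymm : g.IsSymm) (hg : g.Nondegenerate)
    (I S : V →ₗ[ℝ] V)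
    (hI : I ∘ₗ I = -LinearMap.id) (hS : S ∘ₗ S = LinearMap.id)
    (hIS : I ∘ₗ S = -(S ∘ₗ I))
    (hIskew : ∀ v w : V, g (I v) w = - g v (I w))
    (hSskew : ∀ v w : V, g (S v) w = - g v (S w)) :
    let T : V →ₗ[ℝ] V := I ∘ₗ S
    let ω : V → V → ℂ := fun v w => (g (S v) w : ℂ) + Complex.I * (g (T v) w : ℂ)
    (∀ v w : V, ω (I v) w = Complex.I * ω v w) ∧
    (∀ v w : V, ω v (I w) = Complex.I * ω v w) ∧
    (∀ v : V, ω v v = 0) ∧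
    (∀ v : V, (∀ w : V, ω v w = 0) → v = 0) := by
  intro T ω
  have hSI (v : V) : S (I v) = -T v := neg_eq_iff_eq_neg.mp (LinearMap.congr_fun hIS v).symm
  have hTI (v : V) : T (I v) = S v :=
    LinearMap.congr_fun (LinearMap.comp_comp_eq_of_anticomm hI hIS) v
  have hIT (v : V) : I (T v) = -S v := by simpa [T] using LinearMap.congr_fun hI (S v)
  have hIskew' (v w : V) : g v (I w) = -g (I v) w := by rw [hIskew, neg_neg]
  have hTskew : ∀ v w, g (T v) w = -g v (T w) :=
    LinearMap.BilinForm.apply_comp_apply_eq_neg_of_skew hIskew hSskew hIS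
  refine ⟨fun v w => ?_, fun v w => ?_, fun v => ?_, fun v hv => ?_⟩
  · exact Complex.ofReal_add_I_mul_eq_I_mul (by simp [hSI]) (by rw [hTI])
  · refine Complex.ofReal_add_I_mul_eq_I_mul ?_ ?_
    · rw [hIskew']; rfl
    · rw [hIskew', hIT, map_neg, LinearMap.neg_apply, neg_neg]
  · simp [ω, LinearMap.BilinForm.apply_self_eq_zero_of_skew hsymm hSskew,
      LinearMap.BilinForm.apply_self_eq_zero_of_skew hsymm hTskew]
  · have hSv : S v = 0 := hg.1 _ fun w => by simpa [ω] using congrArg Complex.re (hv w)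
    simpa [hSv] using (LinearMap.congr_fun hS v).symm
end

section
/- Let W be a complex vector space and let τ : W → W be a real-linear map that is conjugate-linear (τ(c•w) = conj(c)•τ(w)) and an involution (τ ∘ τ = id). Let ζ ∈ ℂ with |ζ| ≠ 1. Define real-linear maps of W × W by I_ζ(A, Φ) := (1 - |ζ|²)⁻¹ • ( (1 + |ζ|²)•(i•A) + (2·conj ζ)•τΦ , (2·conj ζ)•τA + (1 + |ζ|²)•(i•Φ) ) and F(A, Φ) := (A - (i·conj ζ)•τΦ, Φ - (i·conj ζ)•τA), and let J(A, Φ) := (i•A, i•Φ). Then F ∘ I_ζ = J ∘ F. -/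
/-! `I_ζ` and `F` commute with swapping the two factors, so it suffices to check the first
component. There `τ (c • w) = conj c • τ w` and `τ ∘ τ = id` write both sides as combinations
of `A` and `τ Φ`, and the coefficients agree because `ζ * conj ζ = |ζ|²` turns them into
`(1 - |ζ|²)⁻¹ ((1 + |ζ|²) - 2 |ζ|²) = 1` and `(1 - |ζ|²)⁻¹ (2 - (1 + |ζ|²)) = 1`. -/

open Complex ComplexConjugate

theorem one_sub_norm_sq_ne_zero {ζ : ℂ} (hζ : ‖ζ‖ ≠ 1) : (1 : ℝ) - ‖ζ‖ ^ 2 ≠ 0 := by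
  rw [sub_ne_zero, ne_comm, Ne, pow_eq_one_iff_of_nonneg (norm_nonneg ζ) two_ne_zero]
  exact hζ

theorem conjInvolution_intertwining_fst {W : Type*} [AddCommGroup W] [Module ℂ W]
    {τ : W →ₗ[ℝ] W} (hconj : ∀ (c : ℂ) (w : W), τ (c • w) = conj c • τ w)
    (hinv : ∀ w : W, τ (τ w) = w) {ζ : ℂ} (hζ : ‖ζ‖ ≠ 1) (A Φ : W) :
    (1 - ‖ζ‖ ^ 2)⁻¹ • ((1 + ‖ζ‖ ^ 2 : ℝ) • (I • A) + (2 * conj ζ) • τ Φ)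
      - (I * conj ζ) • τ ((1 - ‖ζ‖ ^ 2)⁻¹ •
          ((2 * conj ζ) • τ A + (1 + ‖ζ‖ ^ 2 : ℝ) • (I • Φ)))
      = I • (A - (I * conj ζ) • τ Φ) := by
  have hs : (1 - (‖ζ‖ : ℂ) ^ 2)⁻¹ * (1 - (‖ζ‖ : ℂ) ^ 2) = 1 :=
    inv_mul_cancel₀ (by exact_mod_cast one_sub_norm_sq_ne_zero hζ)
  -- Real scalars must leave `τ` as real scalars, before they are coerced to `ℂ` and conjugated.
  simp only [map_smul, map_add, hconj, hinv, map_mul, conj_I, conj_conj, map_ofNat]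
  simp only [RCLike.real_smul_eq_coe_smul (K := ℂ), smul_add, smul_sub, smul_smul]
  match_scalars
  · linear_combination I * hs - 2 * I * (1 - (‖ζ‖ : ℂ) ^ 2)⁻¹ * conj_mul' ζ
  · linear_combination conj ζ * hs + conj ζ * ((1 - (‖ζ‖ : ℂ) ^ 2)⁻¹ * (1 + ‖ζ‖ ^ 2) + 1) * I_sq

/-- For a conjugate-linear involution `τ` of a complex vector space `W`
and `ζ ∈ ℂ` with `|ζ| ≠ 1`, the map
`F(A,Φ) = (A - i ζ̄ τΦ, Φ - i ζ̄ τA)` intertwines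
`I_ζ(A,Φ) = (1-|ζ|²)⁻¹ ((1+|ζ|²) iA + 2ζ̄ τΦ, 2ζ̄ τA + (1+|ζ|²) iΦ)`
with `J(A,Φ) = (iA, iΦ)`, i.e. `F ∘ I_ζ = J ∘ F`. -/
theorem stmt8 (W : Type*) [AddCommGroup W] [Module ℂ W]
    (τ : W →ₗ[ℝ] W)
    (hconj : ∀ (c : ℂ) (w : W), τ (c • w) = (starRingEnd ℂ) c • τ w)
    (hinv : ∀ w : W, τ (τ w) = w)
    (ζ : ℂ) (hζ : ‖ζ‖ ≠ 1) :
    let Iζ : W × W → W × W := fun p =>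
      (1 - ‖ζ‖ ^ 2)⁻¹ •
        ((1 + ‖ζ‖ ^ 2 : ℝ) • (Complex.I • p.1)
            + (2 * (starRingEnd ℂ) ζ) • τ p.2,
         (2 * (starRingEnd ℂ) ζ) • τ p.1
            + (1 + ‖ζ‖ ^ 2 : ℝ) • (Complex.I • p.2))
    let F : W × W → W × W := fun p =>
      (p.1 - (Complex.I * (starRingEnd ℂ) ζ) • τ p.2,
       p.2 - (Complex.I * (starRingEnd ℂ) ζ) • τ p.1)
    let J : W × W → W × W := fun p => (Complex.I • p.1, Complex.I • p.2)
    ∀ p : W × W, F (Iζ p) = J (F p) := by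
  intro Iζ F J ⟨A, Φ⟩
  have h := conjInvolution_intertwining_fst hconj hinv hζ
  refine Prod.ext (h A Φ) ?_
  have h' := h Φ A
  rwa [add_comm ((1 + ‖ζ‖ ^ 2 : ℝ) • (I • Φ)), add_comm ((2 * conj ζ) • τ Φ)] at h'
end
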